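/- arXiv:1206.2790 — 5 statements merged into one kernel-verified Lean document; each statement's English description precedes it below -/
import Mathlib

section
/- Let X, Y : ℕ → Option (EuclideanSpace ℝ (Fin 2)) be persistence diagrams in the countable model (each with infinitely many indices mapped to none and with ∑' i, c (X i) none < ∞ and ∑' i, c (Y i) none < ∞). Then the infimum defining the squared L²-Wasserstein distance is attained: there exists a bijection e : ℕ ≃ ℕ such that ∑' i, c (X i) (Y (e i)) = ⨅ (e' : ℕ ≃ ℕ), ∑' i, c (X i) (Y (e' i)). -/
/-!
Encode a bijection `e : ℕ ≃ ℕ` by the pair of maps `i ↦ e i`, `j ↦ e.symm j` into `ℕ∞`. Limits of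
such pairs are partial matchings, in which an index sent to `⊤` has lost its partner to infinity;
they form a compact space. The cost extends to partial matchings lower semicontinuously, an
unmatched point paying its distance to the diagonal: by summability, points of large index lie
close to the diagonal. For this to hold on both sides at once, the cost of every pair is charged to
one endpoint only, in such a way that an endpoint whose partner escapes is eventually the one
charged. So the extended cost has a minimiser, and a partial matching becomes a bijection of the
same cost once every pair involving the diagonal is dissolved and the unmatched points are paired
with the infinitely many diagonal copies of the other diagram.
-/

/-- Cost between two generalized points of a persistence diagram in the countable
model: `some x` is an off-diagonal point, `none` is a copy of the diagonal. -/
noncomputable def diagCost (p q : Option (EuclideanSpace ℝ (Fin 2))) : ℝ :=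
  match p, q with
  | some x, some y => ‖x - y‖ ^ 2
  | some x, none => (x 0 - x 1) ^ 2 / 2
  | none, some y => (y 0 - y 1) ^ 2 / 2
  | none, none => 0

open Filter Topology Set ENNReal

local notation "Pt" => Option (EuclideanSpace ℝ (Fin 2))

@[simp] lemma diagCost_none_none : diagCost none none = 0 := rfl

lemma diagCost_nonneg (p q : Pt) : 0 ≤ diagCost p q := by
  cases p <;> cases q <;> simp only [diagCost] <;> positivity

lemma diagCost_comm (p q : Pt) : diagCost p q = diagCost q p := by
  cases p <;> cases q <;> simp [diagCost, norm_sub_rev]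

lemma diagCost_some_some (x y : EuclideanSpace ℝ (Fin 2)) :
    diagCost (some x) (some y) = (x 0 - y 0) ^ 2 + (x 1 - y 1) ^ 2 := by
  simp [diagCost, EuclideanSpace.norm_sq_eq, Fin.sum_univ_two]

lemma sqrt_diagCost_some_none (x : EuclideanSpace ℝ (Fin 2)) :
    √(diagCost (some x) none) = |x 0 - x 1| / √2 := by
  rw [diagCost, Real.sqrt_div' _ zero_le_two, Real.sqrt_sq_eq_abs]

lemma diagCost_none_le_add_sqrt_mul (p q : Pt) :
    diagCost p none ≤ diagCost p q + 2 * √(diagCost p none) * √(diagCost q none) := by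
  rcases p with _ | x
  · simp only [diagCost_none_none, Real.sqrt_zero, mul_zero, zero_mul, add_zero]
    exact diagCost_nonneg _ _
  rcases q with _ | y
  · simp only [diagCost_none_none, Real.sqrt_zero, mul_zero, add_zero, le_refl]
  rw [sqrt_diagCost_some_none, sqrt_diagCost_some_none, diagCost_some_some]
  have habs : (x 0 - x 1) * (y 0 - y 1) ≤ |x 0 - x 1| * |y 0 - y 1| := by
    rw [← abs_mul]; exact le_abs_self _
  have hprod : 2 * (|x 0 - x 1| / √2) * (|y 0 - y 1| / √2) = |x 0 - x 1| * |y 0 - y 1| := by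
    field_simp; rw [Real.sq_sqrt zero_le_two]; ring
  show (x 0 - x 1) ^ 2 / 2 ≤ _
  nlinarith [sq_nonneg (x 0 - y 0 + (x 1 - y 1)), sq_nonneg (y 0 - y 1)]

def extendTop (Z : ℕ → Pt) (k : ℕ∞) : Pt := ENat.recTopCoe none Z k

@[simp] lemma extendTop_top (Z : ℕ → Pt) : extendTop Z ⊤ = none := rfl

@[simp] lemma extendTop_natCast (Z : ℕ → Pt) (n : ℕ) : extendTop Z n = Z n := rfl

lemma eventually_lt_ofReal_diagCost {ι : Type*} {l : Filter ι} (x : Pt) {q : ι → Pt}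
    (hq : Tendsto (fun n => diagCost (q n) none) l (𝓝 0)) {y : ℝ≥0∞}
    (hy : y < ENNReal.ofReal (diagCost x none)) :
    ∀ᶠ n in l, y < ENNReal.ofReal (diagCost x (q n)) := by
  have hlow : Tendsto (fun n => ENNReal.ofReal
      (diagCost x none - 2 * √(diagCost x none) * √(diagCost (q n) none))) l
      (𝓝 (ENNReal.ofReal (diagCost x none))) := by
    refine ENNReal.tendsto_ofReal ?_
    simpa using ((Real.continuous_sqrt.tendsto 0).comp hq).const_mul
      (2 * √(diagCost x none)) |>.const_sub (diagCost x none)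
  filter_upwards [hlow.eventually (lt_mem_nhds hy)] with n hn
  exact hn.trans_le <| ENNReal.ofReal_le_ofReal <| by
    linarith [diagCost_none_le_add_sqrt_mul x (q n)]

lemma ENat.eventually_nhds_top_of_atTop {P : ℕ∞ → Prop} (htop : P ⊤) (h : ∀ᶠ n : ℕ in atTop, P n) :
    ∀ᶠ k in 𝓝 ⊤, P k := by
  obtain ⟨N, hN⟩ := eventually_atTop.1 h
  filter_upwards [Ioi_mem_nhds (ENat.natCast_lt_top N)] with k hk
  induction k using ENat.recTopCoe with
  | top => exact htop
  | coe n => exact hN n (by exact_mod_cast (mem_Ioi.1 hk).le)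

open scoped Classical in
/-- The share of `diagCost x y` charged to the point `x` at index `i`, when `y` is the point at
index `k` of `Z`: a proper point pays for being paired with the diagonal, and for being paired
with a proper point of index at least `i`. -/
noncomputable def chargedCost (x : Pt) (i : ℕ) (Z : ℕ → Pt) (k : ℕ∞) : ℝ≥0∞ :=
  if x ≠ none ∧ (extendTop Z k = none ∨ (i : ℕ∞) ≤ k) then
    ENNReal.ofReal (diagCost x (extendTop Z k))
  else 0

lemma chargedCost_of_none (x : Pt) (i : ℕ) (Z : ℕ → Pt) {k : ℕ∞}
    (h : x = none ∨ extendTop Z k = none) :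
    chargedCost x i Z k = ENNReal.ofReal (diagCost x none) := by
  rcases x with _ | x
  · simp [chargedCost]
  · simp_all [chargedCost]

lemma lowerSemicontinuous_chargedCost (x : Pt) (i : ℕ) {Z : ℕ → Pt}
    (hZ : Tendsto (fun n => diagCost (Z n) none) atTop (𝓝 0)) :
    LowerSemicontinuous (chargedCost x i Z) := by
  intro k y hy
  induction k using ENat.recTopCoe with
  | coe n => rwa [ENat.nhds_natCast, eventually_pure]
  | top =>
    refine ENat.eventually_nhds_top_of_atTop (P := (y < chargedCost x i Z ·)) hy ?_
    rw [gt_iff_lt, chargedCost_of_none x i Z (.inr rfl)] at hy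
    rcases x with _ | x
    · simp at hy
    filter_upwards [eventually_ge_atTop i, eventually_lt_ofReal_diagCost (some x) hZ hy]
      with n hin hn
    simpa [chargedCost, hin] using hn

lemma chargedCost_add_chargedCost (X Y : ℕ → Pt) (i j : ℕ) :
    chargedCost (X i) i Y j + chargedCost (Y j) (j + 1) X i
      = ENNReal.ofReal (diagCost (X i) (Y j)) := by
  rcases hx : X i with _ | x <;> rcases hy : Y j with _ | y
  · simp [chargedCost, hx, hy]
  · simp [chargedCost, hx, hy, diagCost_comm none]
  · simp [chargedCost, hx, hy]
  · have hji : (j : ℕ∞) + 1 ≤ i ↔ ¬i ≤ j := by norm_cast; omega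
    by_cases h : i ≤ j <;> simp [chargedCost, hx, hy, h, hji, diagCost_comm (some y)]

/-- Partial matchings of `ℕ` with `ℕ`, each index being sent to its partner, or to `⊤` when it is
unmatched. -/
def partialMatchings : Set ((ℕ → ℕ∞) × (ℕ → ℕ∞)) :=
  {m | ∀ i j : ℕ, m.1 i = j ↔ m.2 j = i}

lemma ENat.isClopen_setOf_eq_natCast {α : Type*} [TopologicalSpace α] {f : α → ℕ∞}
    (hf : Continuous f) (n : ℕ) : IsClopen {a | f a = n} :=
  ⟨isClosed_eq hf continuous_const, (ENat.isOpen_singleton (ENat.natCast_ne_top n)).preimage hf⟩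

lemma isClosed_partialMatchings : IsClosed partialMatchings := by
  simp only [partialMatchings, ofPred_forall, iff_iff_implies_and_implies, ofPred_and]
  refine isClosed_iInter fun i => isClosed_iInter fun j => ?_
  have h1 := ENat.isClopen_setOf_eq_natCast
    (show Continuous fun m : (ℕ → ℕ∞) × (ℕ → ℕ∞) => m.1 i by fun_prop)
  have h2 := ENat.isClopen_setOf_eq_natCast
    (show Continuous fun m : (ℕ → ℕ∞) × (ℕ → ℕ∞) => m.2 j by fun_prop)
  exact (isClosed_imp (h1 j).isOpen (h2 i).isClosed).inter
    (isClosed_imp (h2 i).isOpen (h1 j).isClosed)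

def equivMatching (e : ℕ ≃ ℕ) : (ℕ → ℕ∞) × (ℕ → ℕ∞) := (fun i => e i, fun j => e.symm j)

lemma equivMatching_mem (e : ℕ ≃ ℕ) : equivMatching e ∈ partialMatchings := by
  intro i j
  simp only [equivMatching, Nat.cast_inj]
  rw [e.symm_apply_eq, eq_comm]

/-- The `j + 1` breaks ties in favour of `X`, so that every pair is charged exactly once
(`chargedCost_add_chargedCost`). -/
noncomputable def matchingCost (X Y : ℕ → Pt) (m : (ℕ → ℕ∞) × (ℕ → ℕ∞)) : ℝ≥0∞ :=
  ∑' i, chargedCost (X i) i Y (m.1 i) + ∑' j, chargedCost (Y j) (j + 1) X (m.2 j)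

lemma matchingCost_equivMatching (X Y : ℕ → Pt) (e : ℕ ≃ ℕ) :
    matchingCost X Y (equivMatching e) = ∑' i, ENNReal.ofReal (diagCost (X i) (Y (e i))) := by
  rw [matchingCost, equivMatching, ← e.tsum_eq fun j => chargedCost (Y j) (j + 1) X (e.symm j),
    ← ENNReal.tsum_add]
  simp [chargedCost_add_chargedCost]

lemma lowerSemicontinuous_matchingCost {X Y : ℕ → Pt}
    (hX : Tendsto (fun n => diagCost (X n) none) atTop (𝓝 0))
    (hY : Tendsto (fun n => diagCost (Y n) none) atTop (𝓝 0)) :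
    LowerSemicontinuous (matchingCost X Y) :=
  (lowerSemicontinuous_tsum fun i => (lowerSemicontinuous_chargedCost _ i hY).comp
    ((continuous_apply i).comp continuous_fst)).add
  (lowerSemicontinuous_tsum fun j => (lowerSemicontinuous_chargedCost _ (j + 1) hX).comp
    ((continuous_apply j).comp continuous_snd))

lemma exists_equiv_forall_or {α β : Type*} [Countable α] [Countable β] (D : α → Prop)
    (D' : β → Prop) [Infinite {a // D a}] [Infinite {b // D' b}] :
    ∃ f : α ≃ β, ∀ a, D a ∨ D' (f a) := by
  classical
  obtain ⟨u⟩ : Nonempty ({a // D a} ≃ {b // ¬D' b} ⊕ ℕ) := inferInstance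
  obtain ⟨v⟩ : Nonempty ({b // D' b} ≃ {a // ¬D a} ⊕ ℕ) := inferInstance
  let f : α ≃ β :=
    ((Equiv.sumCompl D).symm.trans (Equiv.sumComm _ _)).trans <|
      ((Equiv.sumCongr (Equiv.refl _) u).trans <| (Equiv.sumAssoc _ _ _).symm.trans <|
        (Equiv.sumCongr (Equiv.sumComm _ _) (Equiv.refl ℕ)).trans (Equiv.sumAssoc _ _ _)).trans <|
      (Equiv.sumCongr (Equiv.refl _) v.symm).trans ((Equiv.sumComm _ _).trans (Equiv.sumCompl D'))
  refine ⟨f, fun a => or_iff_not_imp_left.2 fun ha => ?_⟩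
  simpa [f, ha] using (v.symm (.inl ⟨a, ha⟩)).2

def ProperlyMatched (X Y : ℕ → Pt) (p : ℕ → ℕ∞) (i : ℕ) : Prop :=
  ∃ j : ℕ, p i = j ∧ X i ≠ none ∧ Y j ≠ none

lemma or_of_not_properlyMatched {X Y : ℕ → Pt} {p : ℕ → ℕ∞} {i : ℕ}
    (h : ¬ProperlyMatched X Y p i) : X i = none ∨ extendTop Y (p i) = none := by
  rw [or_iff_not_imp_left]
  intro hx
  induction hp : p i using ENat.recTopCoe with
  | top => rfl
  | coe j => by_contra hy; exact h ⟨j, hp, hx, hy⟩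

lemma exists_equiv_properlyMatched {X Y : ℕ → Pt} {m : (ℕ → ℕ∞) × (ℕ → ℕ∞)}
    (hm : m ∈ partialMatchings) :
    ∃ g : {i // ProperlyMatched X Y m.1 i} ≃ {j // ProperlyMatched Y X m.2 j},
      (∀ a, (g a : ℕ∞) = m.1 a) ∧ ∀ b, (g.symm b : ℕ∞) = m.2 b := by
  have fwd : ∀ a : {i // ProperlyMatched X Y m.1 i}, ProperlyMatched Y X m.2 (m.1 a).toNat := by
    rintro ⟨i, j, hj, hx, hy⟩
    exact ⟨i, by simpa [hj] using (hm i j).1 hj, by simpa [hj], hx⟩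
  have bwd : ∀ b : {j // ProperlyMatched Y X m.2 j}, ProperlyMatched X Y m.1 (m.2 b).toNat := by
    rintro ⟨j, i, hi, hy, hx⟩
    exact ⟨j, by simpa [hi] using (hm i j).2 hi, by simpa [hi], hy⟩
  refine ⟨⟨fun a => ⟨_, fwd a⟩, fun b => ⟨_, bwd b⟩, ?_, ?_⟩, ?_, ?_⟩
  · rintro ⟨i, j, hj, -⟩
    simp [hj, (hm i j).1 hj]
  · rintro ⟨j, i, hi, -⟩
    simp [hi, (hm i j).2 hi]
  · rintro ⟨i, j, hj, -⟩
    simp [hj]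
  · rintro ⟨j, i, hi, -⟩
    simp [hi]

open scoped Classical in
lemma chargedCost_subtypeCongr (X Y : ℕ → Pt) (p : ℕ → ℕ∞) {Q : ℕ → Prop}
    (g : {i // ProperlyMatched X Y p i} ≃ {j // Q j}) (hg : ∀ a, (g a : ℕ∞) = p a)
    (f : {i // ¬ProperlyMatched X Y p i} ≃ {j // ¬Q j})
    (hf : ∀ a : {i // ¬ProperlyMatched X Y p i}, X a = none ∨ Y (f a) = none) (i s : ℕ) :
    chargedCost (X i) s Y (Equiv.subtypeCongr g f i) = chargedCost (X i) s Y (p i) := by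
  by_cases h : ProperlyMatched X Y p i
  · simp [Equiv.subtypeCongr, h, hg]
  · rw [chargedCost_of_none _ _ _ (or_of_not_properlyMatched h), chargedCost_of_none]
    simpa [Equiv.subtypeCongr, h] using hf ⟨i, h⟩

lemma exists_equiv_matchingCost_eq {X Y : ℕ → Pt} (hX : {i | X i = none}.Infinite)
    (hY : {j | Y j = none}.Infinite) {m : (ℕ → ℕ∞) × (ℕ → ℕ∞)} (hm : m ∈ partialMatchings) :
    ∃ e : ℕ ≃ ℕ, matchingCost X Y (equivMatching e) = matchingCost X Y m := by
  classical
  obtain ⟨g, hg, hg'⟩ := exists_equiv_properlyMatched (X := X) (Y := Y) hm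
  have : Infinite {a : {i // ¬ProperlyMatched X Y m.1 i} // X a = none} :=
    have := hX.to_subtype
    .of_injective (fun i : {i | X i = none} => ⟨⟨i, fun ⟨_, _, hx, _⟩ => hx i.2⟩, i.2⟩)
      fun _ _ h => Subtype.ext (congrArg (fun a => a.1.1) h)
  have : Infinite {b : {j // ¬ProperlyMatched Y X m.2 j} // Y b = none} :=
    have := hY.to_subtype
    .of_injective (fun j : {j | Y j = none} => ⟨⟨j, fun ⟨_, _, hy, _⟩ => hy j.2⟩, j.2⟩)
      fun _ _ h => Subtype.ext (congrArg (fun b => b.1.1) h)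
  obtain ⟨f, hf⟩ := exists_equiv_forall_or (α := {i // ¬ProperlyMatched X Y m.1 i})
    (β := {j // ¬ProperlyMatched Y X m.2 j}) (fun a => X a = none) (fun b => Y b = none)
  refine ⟨Equiv.subtypeCongr g f, ?_⟩
  unfold matchingCost equivMatching
  congr 1 <;> refine tsum_congr fun i => ?_
  · exact chargedCost_subtypeCongr X Y m.1 g hg f hf i i
  · exact chargedCost_subtypeCongr Y X m.2 g.symm hg' f.symm
      (fun b => by simpa using (hf (f.symm b)).symm) i (i + 1)

lemma exists_forall_tsum_ofReal_diagCost_le {X Y : ℕ → Pt} (hX : {i | X i = none}.Infinite)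
    (hY : {j | Y j = none}.Infinite) (hXs : Summable fun i => diagCost (X i) none)
    (hYs : Summable fun j => diagCost (Y j) none) :
    ∃ e : ℕ ≃ ℕ, ∀ e' : ℕ ≃ ℕ, ∑' i, ENNReal.ofReal (diagCost (X i) (Y (e i)))
      ≤ ∑' i, ENNReal.ofReal (diagCost (X i) (Y (e' i))) := by
  obtain ⟨m, hm, hmin⟩ :=
    ((lowerSemicontinuous_matchingCost hXs.tendsto_atTop_zero
      hYs.tendsto_atTop_zero).lowerSemicontinuousOn _).exists_isMinOn
      ⟨_, equivMatching_mem (Equiv.refl ℕ)⟩ isClosed_partialMatchings.isCompact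
  obtain ⟨e, he⟩ := exists_equiv_matchingCost_eq hX hY hm
  refine ⟨e, fun e' => ?_⟩
  rw [← matchingCost_equivMatching, ← matchingCost_equivMatching, he]
  exact hmin (equivMatching_mem e')

lemma exists_tsum_eq_iInf_of_forall_tsum_ofReal_le {ι : Type*} {f : ι → ℕ → ℝ}
    (hf : ∀ a n, 0 ≤ f a n) {a₀ : ι}
    (h : ∀ a, ∑' n, ENNReal.ofReal (f a₀ n) ≤ ∑' n, ENNReal.ofReal (f a n)) :
    ∃ a, ∑' n, f a n = ⨅ a', ∑' n, f a' n := by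
  have : Nonempty ι := ⟨a₀⟩
  have hbdd : BddBelow (range fun a => ∑' n, f a n) :=
    ⟨0, by rintro _ ⟨a, rfl⟩; exact tsum_nonneg (hf a)⟩
  by_cases hs : ∀ a, Summable (f a)
  · refine ⟨a₀, le_antisymm (le_ciInf fun a => ?_) (ciInf_le hbdd a₀)⟩
    have := h a
    rwa [← ENNReal.ofReal_tsum_of_nonneg (hf a₀) (hs a₀),
      ← ENNReal.ofReal_tsum_of_nonneg (hf a) (hs a),
      ENNReal.ofReal_le_ofReal_iff (tsum_nonneg (hf a))] at this
  · -- a non-summable series has `tsum` zero, which is then the infimum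
    obtain ⟨a, ha⟩ := not_forall.1 hs
    refine ⟨a, le_antisymm ?_ (ciInf_le hbdd a)⟩
    rw [tsum_eq_zero_of_not_summable ha]
    exact le_ciInf fun a' => tsum_nonneg (hf a')

/-- The infimum defining the squared L²-Wasserstein distance between two
persistence diagrams is attained by some bijection. -/
theorem infimum_attained_L2_wasserstein
    (X Y : ℕ → Option (EuclideanSpace ℝ (Fin 2)))
    (hX : {i | X i = none}.Infinite) (hY : {i | Y i = none}.Infinite)
    (hXs : Summable fun i => diagCost (X i) none)
    (hYs : Summable fun i => diagCost (Y i) none) :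
    ∃ e : ℕ ≃ ℕ, ∑' i, diagCost (X i) (Y (e i)) =
      ⨅ e' : ℕ ≃ ℕ, ∑' i, diagCost (X i) (Y (e' i)) := by
  obtain ⟨e, he⟩ := exists_forall_tsum_ofReal_diagCost_le hX hY hXs hYs
  exact exists_tsum_eq_iInf_of_forall_tsum_ofReal_le (fun _ _ => diagCost_nonneg _ _) he
end

section
/- Let X, Y : Fin n → E be configurations and let σ be an optimal pairing between X and Y, i.e. ∑ i, ‖X i − Y (σ i)‖² = min over permutations τ of ∑ i, ‖X i − Y (τ i)‖². Define the interpolating path γ : [0,1] → (Fin n → E) by γ t i = (1−t) • X i + t • Y (σ i). Then for all s, t ∈ [0,1], D(γ s, γ t) = |s − t| · D(X, Y); in particular γ is a (minimal) geodesic from X to Y for the L²-matching distance. -/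
open scoped RealInnerProductSpace

/-- The squared L²-matching distance between two configurations of `n` points. -/
noncomputable def sqD {E : Type*} [NormedAddCommGroup E] [InnerProductSpace ℝ E] {n : ℕ}
    (X Y : Fin n → E) : ℝ :=
  ⨅ σ : Equiv.Perm (Fin n), ∑ i, ‖X i - Y (σ i)‖ ^ 2

/-- The L²-matching distance between two configurations of `n` points. -/
noncomputable def matchD {E : Type*} [NormedAddCommGroup E] [InnerProductSpace ℝ E] {n : ℕ}
    (X Y : Fin n → E) : ℝ :=
  Real.sqrt (sqD X Y)

/-!
Matching `X i` with `Y (σ i)` and `γ s i` with `γ t i` shows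
`D(γ s, γ t) ≤ |s - t| D(X, Y)`, and likewise `D(X, γ s) ≤ s D(X, Y)` and
`D(γ t, Y) ≤ (1 - t) D(X, Y)`. For `s ≤ t` the triangle inequality
`D(X, Y) ≤ D(X, γ s) + D(γ s, γ t) + D(γ t, Y)` then forces equality in the middle bound.
-/

section Minkowski

variable {ι F : Type*} [Fintype ι] [SeminormedAddCommGroup F]

theorem sqrt_sum_norm_sq_eq_norm_toLp (u : ι → F) :
    √(∑ i, ‖u i‖ ^ 2) = ‖WithLp.toLp 2 u‖ := by
  rw [PiLp.norm_eq_of_L2]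

theorem sqrt_sum_norm_sq_add_le (u v : ι → F) :
    √(∑ i, ‖u i + v i‖ ^ 2) ≤ √(∑ i, ‖u i‖ ^ 2) + √(∑ i, ‖v i‖ ^ 2) := by
  simp only [sqrt_sum_norm_sq_eq_norm_toLp]
  exact norm_add_le (WithLp.toLp 2 u) (WithLp.toLp 2 v)

end Minkowski

section MatchingDistance

variable {E : Type*} [NormedAddCommGroup E] [InnerProductSpace ℝ E] {n : ℕ}

theorem sqD_le (X Y : Fin n → E) (τ : Equiv.Perm (Fin n)) :
    sqD X Y ≤ ∑ i, ‖X i - Y (τ i)‖ ^ 2 :=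
  ciInf_le (Set.finite_range _).bddBelow τ

theorem exists_perm_sum_eq_sqD (X Y : Fin n → E) :
    ∃ σ : Equiv.Perm (Fin n), ∑ i, ‖X i - Y (σ i)‖ ^ 2 = sqD X Y := by
  obtain ⟨σ, hσ⟩ := Finite.exists_min fun τ : Equiv.Perm (Fin n) => ∑ i, ‖X i - Y (τ i)‖ ^ 2
  exact ⟨σ, le_antisymm (le_ciInf hσ) (sqD_le X Y σ)⟩

theorem sqD_comm (X Y : Fin n → E) : sqD X Y = sqD Y X := by
  have key : ∀ X Y : Fin n → E, sqD X Y ≤ sqD Y X := fun X Y =>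
    le_ciInf fun τ => (sqD_le X Y τ⁻¹).trans_eq <| by
      rw [← Equiv.sum_comp τ]
      simp [norm_sub_rev]
  exact le_antisymm (key X Y) (key Y X)

theorem matchD_comm (X Y : Fin n → E) : matchD X Y = matchD Y X := by
  rw [matchD, matchD, sqD_comm]

/-- Compose an optimal pairing of `X, Y` with one of `Y, Z` and apply Minkowski. -/
theorem matchD_triangle (X Y Z : Fin n → E) : matchD X Z ≤ matchD X Y + matchD Y Z := by
  obtain ⟨α, hα⟩ := exists_perm_sum_eq_sqD X Y
  obtain ⟨β, hβ⟩ := exists_perm_sum_eq_sqD Y Z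
  have hsplit : ∀ i, X i - Z (β (α i)) = (X i - Y (α i)) + (Y (α i) - Z (β (α i))) :=
    fun i => (sub_add_sub_cancel _ _ _).symm
  calc matchD X Z ≤ √(∑ i, ‖X i - Z (β (α i))‖ ^ 2) := Real.sqrt_le_sqrt (sqD_le X Z (α.trans β))
    _ ≤ √(∑ i, ‖X i - Y (α i)‖ ^ 2) + √(∑ i, ‖Y (α i) - Z (β (α i))‖ ^ 2) := by
        simpa only [hsplit] using sqrt_sum_norm_sq_add_le _ _
    _ = matchD X Y + matchD Y Z := by
        rw [matchD, matchD, ← hα, ← hβ, Equiv.sum_comp α fun i => ‖Y i - Z (β i)‖ ^ 2]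

theorem matchD_le_abs_mul_matchD {X Y A B : Fin n → E} {σ : Equiv.Perm (Fin n)}
    (hσ : ∑ i, ‖X i - Y (σ i)‖ ^ 2 = sqD X Y) (τ : Equiv.Perm (Fin n)) (c : ℝ)
    (h : ∀ i, A i - B (τ i) = c • (X i - Y (σ i))) :
    matchD A B ≤ |c| * matchD X Y :=
  calc matchD A B ≤ √(∑ i, ‖A i - B (τ i)‖ ^ 2) := Real.sqrt_le_sqrt (sqD_le A B τ)
    _ = √(c ^ 2 * ∑ i, ‖X i - Y (σ i)‖ ^ 2) := by
        simp only [h, norm_smul, mul_pow, Finset.mul_sum, Real.norm_eq_abs, sq_abs]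
    _ = |c| * matchD X Y := by
        rw [hσ, Real.sqrt_mul (sq_nonneg c), Real.sqrt_sq_eq_abs, matchD]

end MatchingDistance

/-- The linear interpolation along an optimal pairing is a (minimal) geodesic:
`D(γ s, γ t) = |s − t| · D(X, Y)` for `s, t ∈ [0,1]`. -/
theorem interpolation_is_geodesic
    {E : Type*} [NormedAddCommGroup E] [InnerProductSpace ℝ E] {n : ℕ}
    (X Y : Fin n → E) (σ : Equiv.Perm (Fin n))
    (hσ : ∑ i, ‖X i - Y (σ i)‖ ^ 2 = sqD X Y)
    (γ : ℝ → Fin n → E) (hγ : ∀ t i, γ t i = (1 - t) • X i + t • Y (σ i)) :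
    ∀ s ∈ Set.Icc (0 : ℝ) 1, ∀ t ∈ Set.Icc (0 : ℝ) 1,
      matchD (γ s) (γ t) = |s - t| * matchD X Y := by
  intro s hs t ht
  wlog hst : s ≤ t generalizing s t
  · rw [matchD_comm, abs_sub_comm]
    exact this t ht s hs (le_of_not_ge hst)
  have hXs : matchD X (γ s) ≤ |s| * matchD X Y :=
    matchD_le_abs_mul_matchD hσ 1 s fun i => by rw [Equiv.Perm.one_apply, hγ]; module
  have hst' : matchD (γ s) (γ t) ≤ |t - s| * matchD X Y :=
    matchD_le_abs_mul_matchD hσ 1 (t - s) fun i => by rw [Equiv.Perm.one_apply, hγ, hγ]; module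
  have htY : matchD (γ t) Y ≤ |1 - t| * matchD X Y :=
    matchD_le_abs_mul_matchD hσ σ (1 - t) fun i => by rw [hγ]; module
  rw [abs_of_nonneg hs.1] at hXs
  rw [abs_of_nonneg (sub_nonneg.2 ht.2)] at htY
  rw [abs_of_nonneg (sub_nonneg.2 hst)] at hst'
  rw [abs_of_nonpos (sub_nonpos.2 hst)]
  have := matchD_triangle X (γ s) Y
  have := matchD_triangle (γ s) (γ t) Y
  linarith
end

section
/- (Non-uniqueness of geodesics at arbitrarily small scales; the space of persistence diagrams is not CAT(k) for any k > 0.) For every ε > 0 there exist configurations X, Y, M₁, M₂ : Fin 2 → EuclideanSpace ℝ (Fin 2) such that 0 < D(X,Y) < ε, D(X,M₁) = D(M₁,Y) = D(X,Y)/2, D(X,M₂) = D(M₂,Y) = D(X,Y)/2, and M₂ is not a relabeling of M₁ (there is no permutation σ of Fin 2 with M₂ = M₁ ∘ σ); hence X and Y admit two distinct midpoints. -/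
/-! The two diagonals of a square, read as two-point diagrams, are matched equally well by
pairing each corner with its horizontal neighbour or with its vertical neighbour. Moving
halfway along either optimal matching gives a midpoint: the midpoints of the two horizontal
edges, respectively of the two vertical edges, and these diagrams differ. Scaling the square
by `c > 0` scales all matching distances by `c`, so this happens at every scale. -/

section MatchingDistance

variable {E : Type*} [NormedAddCommGroup E] [InnerProductSpace ℝ E]

theorem sqD_fin_two (X Y : Fin 2 → E) :
    sqD X Y = min (‖X 0 - Y 0‖ ^ 2 + ‖X 1 - Y 1‖ ^ 2) (‖X 0 - Y 1‖ ^ 2 + ‖X 1 - Y 0‖ ^ 2) := by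
  have hperm : ∀ σ : Equiv.Perm (Fin 2), σ = 1 ∨ σ = Equiv.swap 0 1 := by decide
  have hbdd : BddBelow (Set.range fun σ : Equiv.Perm (Fin 2) => ∑ i, ‖X i - Y (σ i)‖ ^ 2) :=
    (Set.finite_range _).bddBelow
  apply le_antisymm
  · apply le_min
    · exact (ciInf_le hbdd 1).trans_eq (by simp [Fin.sum_univ_two])
    · exact (ciInf_le hbdd (Equiv.swap 0 1)).trans_eq (by simp [Fin.sum_univ_two])
  · refine le_ciInf fun σ => ?_
    rcases hperm σ with rfl | rfl
    · exact (min_le_left _ _).trans_eq (by simp [Fin.sum_univ_two])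
    · exact (min_le_right _ _).trans_eq (by simp [Fin.sum_univ_two])

variable {n : ℕ}

theorem sqD_smul (c : ℝ) (X Y : Fin n → E) : sqD (c • X) (c • Y) = c ^ 2 * sqD X Y := by
  simp only [sqD, Real.mul_iInf_of_nonneg (sq_nonneg c), Finset.mul_sum, Pi.smul_apply,
    ← smul_sub, norm_smul, mul_pow, Real.norm_eq_abs, sq_abs]

theorem matchD_smul (c : ℝ) (X Y : Fin n → E) : matchD (c • X) (c • Y) = |c| * matchD X Y := by
  rw [matchD, matchD, sqD_smul, Real.sqrt_mul (sq_nonneg c), Real.sqrt_sq_eq_abs]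

def IsMatchMidpoint (X Y M : Fin n → E) : Prop :=
  matchD X M = matchD X Y / 2 ∧ matchD M Y = matchD X Y / 2

theorem matchD_eq_half_of_sqD_eq_quarter {X Y M N : Fin n → E} (h : sqD M N = sqD X Y / 4) :
    matchD M N = matchD X Y / 2 := by
  rw [matchD, matchD, h, Real.sqrt_div' _ (by norm_num : (0 : ℝ) ≤ 4),
    show (4 : ℝ) = 2 ^ 2 by norm_num, Real.sqrt_sq (by norm_num)]

theorem isMatchMidpoint_of_sqD_eq {X Y M : Fin n → E}
    (hXM : sqD X M = sqD X Y / 4) (hMY : sqD M Y = sqD X Y / 4) : IsMatchMidpoint X Y M :=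
  ⟨matchD_eq_half_of_sqD_eq_quarter hXM, matchD_eq_half_of_sqD_eq_quarter hMY⟩

theorem IsMatchMidpoint.smul {X Y M : Fin n → E} (h : IsMatchMidpoint X Y M) (c : ℝ) :
    IsMatchMidpoint (c • X) (c • Y) (c • M) := by
  simp only [IsMatchMidpoint, matchD_smul, h.1, h.2, mul_div_assoc, and_self]

theorem not_exists_relabeling_smul {c : ℝ} (hc : c ≠ 0) {M₁ M₂ : Fin n → E}
    (h : ¬ ∃ σ : Equiv.Perm (Fin n), M₂ = M₁ ∘ σ) :
    ¬ ∃ σ : Equiv.Perm (Fin n), c • M₂ = (c • M₁) ∘ σ := by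
  rintro ⟨σ, hσ⟩
  exact h ⟨σ, funext fun i => smul_right_injective E hc (congrFun hσ i)⟩

end MatchingDistance

section UnitSquare

noncomputable def diagonalCorners : Fin 2 → EuclideanSpace ℝ (Fin 2) := ![!₂[0, 0], !₂[1, 1]]

noncomputable def antidiagonalCorners : Fin 2 → EuclideanSpace ℝ (Fin 2) := ![!₂[1, 0], !₂[0, 1]]

noncomputable def horizontalEdgeMidpoints : Fin 2 → EuclideanSpace ℝ (Fin 2) :=
  ![!₂[1 / 2, 0], !₂[1 / 2, 1]]

noncomputable def verticalEdgeMidpoints : Fin 2 → EuclideanSpace ℝ (Fin 2) :=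
  ![!₂[0, 1 / 2], !₂[1, 1 / 2]]

theorem sqD_diagonalCorners_antidiagonalCorners :
    sqD diagonalCorners antidiagonalCorners = 2 := by
  simp [sqD_fin_two, diagonalCorners, antidiagonalCorners, EuclideanSpace.norm_sq_eq,
    Fin.sum_univ_two]
  norm_num

theorem matchD_diagonalCorners_antidiagonalCorners :
    matchD diagonalCorners antidiagonalCorners = √2 := by
  rw [matchD, sqD_diagonalCorners_antidiagonalCorners]

theorem isMatchMidpoint_horizontalEdgeMidpoints :
    IsMatchMidpoint diagonalCorners antidiagonalCorners horizontalEdgeMidpoints := by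
  apply isMatchMidpoint_of_sqD_eq <;>
  · rw [sqD_diagonalCorners_antidiagonalCorners]
    simp [sqD_fin_two, diagonalCorners,
      antidiagonalCorners, horizontalEdgeMidpoints, EuclideanSpace.norm_sq_eq, Fin.sum_univ_two]
    norm_num

theorem isMatchMidpoint_verticalEdgeMidpoints :
    IsMatchMidpoint diagonalCorners antidiagonalCorners verticalEdgeMidpoints := by
  apply isMatchMidpoint_of_sqD_eq <;>
  · rw [sqD_diagonalCorners_antidiagonalCorners]
    simp [sqD_fin_two, diagonalCorners,
      antidiagonalCorners, verticalEdgeMidpoints, EuclideanSpace.norm_sq_eq, Fin.sum_univ_two]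
    norm_num

theorem not_exists_verticalEdgeMidpoints_eq_comp :
    ¬ ∃ σ : Equiv.Perm (Fin 2), verticalEdgeMidpoints = horizontalEdgeMidpoints ∘ σ := by
  rintro ⟨σ, hσ⟩
  have hfirst := congrArg (fun v : EuclideanSpace ℝ (Fin 2) => v 0) (congrFun hσ 0)
  have hhoriz : ∀ j, horizontalEdgeMidpoints j 0 = 1 / 2 := by
    intro j; fin_cases j <;> simp [horizontalEdgeMidpoints]
  simp [hhoriz, verticalEdgeMidpoints] at hfirst

end UnitSquare

/-- Non-uniqueness of geodesics at arbitrarily small scales: for every `ε > 0`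
there are configurations `X, Y` at positive distance `< ε` admitting two distinct
midpoints `M₁, M₂` (not relabelings of each other). Hence the space of persistence
diagrams is not CAT(k) for any `k > 0`. -/
theorem two_distinct_midpoints_at_all_scales :
    ∀ ε > (0 : ℝ), ∃ X Y M₁ M₂ : Fin 2 → EuclideanSpace ℝ (Fin 2),
      0 < matchD X Y ∧ matchD X Y < ε ∧
      matchD X M₁ = matchD X Y / 2 ∧ matchD M₁ Y = matchD X Y / 2 ∧
      matchD X M₂ = matchD X Y / 2 ∧ matchD M₂ Y = matchD X Y / 2 ∧
      ¬ ∃ σ : Equiv.Perm (Fin 2), M₂ = M₁ ∘ σ := by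
  intro ε hε
  have hc : 0 < ε / 2 := half_pos hε
  have hXY : matchD ((ε / 2) • diagonalCorners) ((ε / 2) • antidiagonalCorners) = ε / 2 * √2 := by
    rw [matchD_smul, matchD_diagonalCorners_antidiagonalCorners, abs_of_pos hc]
  obtain ⟨h₁, h₁'⟩ := isMatchMidpoint_horizontalEdgeMidpoints.smul (ε / 2)
  obtain ⟨h₂, h₂'⟩ := isMatchMidpoint_verticalEdgeMidpoints.smul (ε / 2)
  refine ⟨_, _, _, _, ?_, ?_, h₁, h₁', h₂, h₂',
    not_exists_relabeling_smul hc.ne' not_exists_verticalEdgeMidpoints_eq_comp⟩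
  · rw [hXY]; positivity
  · have hsqrt : √2 < 2 := (Real.sqrt_lt' two_pos).2 (by norm_num)
    rw [hXY]
    calc ε / 2 * √2 < ε / 2 * 2 := mul_lt_mul_of_pos_left hsqrt hc
      _ = ε := by ring
end

section
/- (Quantitative stability of the Fréchet mean under empirical reweighting.) Let E be a real inner product space, m, J ≥ 1, and z : Fin m → Fin J → E. Let y : Fin J → E satisfy y j = (1/m) • ∑_{i=1}^m z i j for every j (each point of y is the arithmetic mean of its m paired points), and set V = (1/m) ∑_{i=1}^m ∑_{j=1}^J ‖y j − z i j‖². Let n > 0, ε ≥ 0, and let ξ : Fin m → ℝ be weights with ∑_{i=1}^m ξ i = n and |ξ i − n/m| ≤ ε·n/m for all i. Then the reweighted means y_n j = (1/n) • ∑_{i=1}^m ξ i • z i j satisfy ∑_{j=1}^J ‖y j − y_n j‖² ≤ ε² · V. -/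
/-! Writing `cᵢ = ξᵢ/n − 1/m`, the weights `cᵢ` sum to zero, so `y − yₙ = ∑ᵢ cᵢ • (y − zᵢ)`.
Since `|cᵢ| ≤ ε/m`, the triangle inequality and Cauchy–Schwarz give
`‖y − yₙ‖² ≤ (ε/m)² · m · ∑ᵢ ‖y − zᵢ‖²`, and summing over the points of the mean gives `ε² V`. -/

open Finset

theorem sq_norm_sum_smul_le_of_abs_le {ι E : Type*} [Fintype ι] [SeminormedAddCommGroup E]
    [NormedSpace ℝ E] (c : ι → ℝ) (w : ι → E) {δ : ℝ} (hc : ∀ i, |c i| ≤ δ) :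
    ‖∑ i, c i • w i‖ ^ 2 ≤ δ ^ 2 * Fintype.card ι * ∑ i, ‖w i‖ ^ 2 := by
  have h_norm : ‖∑ i, c i • w i‖ ≤ δ * ∑ i, ‖w i‖ := by
    rw [mul_sum]
    refine (norm_sum_le _ _).trans (sum_le_sum fun i _ => ?_)
    rw [norm_smul, Real.norm_eq_abs]
    exact mul_le_mul_of_nonneg_right (hc i) (norm_nonneg _)
  have h_cs : (∑ i, ‖w i‖) ^ 2 ≤ Fintype.card ι * ∑ i, ‖w i‖ ^ 2 := by
    simpa using sq_sum_le_card_mul_sum_sq (s := univ) (f := fun i => ‖w i‖)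
  calc ‖∑ i, c i • w i‖ ^ 2 ≤ (δ * ∑ i, ‖w i‖) ^ 2 := by gcongr
    _ = δ ^ 2 * (∑ i, ‖w i‖) ^ 2 := mul_pow _ _ _
    _ ≤ δ ^ 2 * (Fintype.card ι * ∑ i, ‖w i‖ ^ 2) := by gcongr
    _ = δ ^ 2 * Fintype.card ι * ∑ i, ‖w i‖ ^ 2 := (mul_assoc _ _ _).symm

theorem sum_smul_sub_eq_neg_sum_smul_of_sum_eq_zero {ι E : Type*} [Fintype ι] [AddCommGroup E]
    [Module ℝ E] {c : ι → ℝ} (hc : ∑ i, c i = 0) (p : E) (z : ι → E) :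
    ∑ i, c i • (p - z i) = -∑ i, c i • z i := by
  simp only [smul_sub, sum_sub_distrib, ← sum_smul, hc, zero_smul, zero_sub]

theorem frechet_mean_reweighting_stability_general
    {E : Type*} [NormedAddCommGroup E] [InnerProductSpace ℝ E]
    (m J : ℕ)
    (z : Fin m → Fin J → E) (y : Fin J → E)
    (hy : ∀ j, y j = (1 / m : ℝ) • ∑ i, z i j)
    (V : ℝ) (hV : V = (1 / m : ℝ) * ∑ i, ∑ j, ‖y j - z i j‖ ^ 2)
    (n : ℝ) (hn : 0 < n) (ε : ℝ)
    (ξ : Fin m → ℝ) (hsum : ∑ i, ξ i = n) (hξ : ∀ i, |ξ i - n / m| ≤ ε * n / m)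
    (yn : Fin J → E) (hyn : ∀ j, yn j = (1 / n : ℝ) • ∑ i, ξ i • z i j) :
    ∑ j, ‖y j - yn j‖ ^ 2 ≤ ε ^ 2 * V := by
  have hm : (m : ℝ) ≠ 0 := by
    rintro hm
    obtain rfl : m = 0 := by exact_mod_cast hm
    simp only [univ_eq_empty, sum_empty] at hsum
    exact hn.ne hsum
  set c : Fin m → ℝ := fun i => ξ i / n - 1 / m
  have hc_sum : ∑ i, c i = 0 := by
    simp only [c, sum_sub_distrib, ← sum_div, hsum, sum_const, card_univ, Fintype.card_fin,
      nsmul_eq_mul, div_self hn.ne', mul_one, div_self hm, sub_self]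
  have hc_abs : ∀ i, |c i| ≤ ε / m := fun i => by
    have : c i = (ξ i - n / m) / n := by simp only [c]; field_simp
    rw [this, abs_div, abs_of_pos hn, div_le_iff₀ hn, div_mul_eq_mul_div]
    exact hξ i
  have h_diff : ∀ j, y j - yn j = ∑ i, c i • (y j - z i j) := fun j => by
    rw [sum_smul_sub_eq_neg_sum_smul_of_sum_eq_zero hc_sum, hy, hyn]
    simp only [c, sub_smul, sum_sub_distrib, smul_sum, smul_smul]
    simp only [div_eq_inv_mul, mul_one, neg_sub]
  calc ∑ j, ‖y j - yn j‖ ^ 2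
      ≤ ∑ j, (ε / m) ^ 2 * m * ∑ i, ‖y j - z i j‖ ^ 2 := sum_le_sum fun j _ => by
        simpa only [h_diff, Fintype.card_fin] using
          sq_norm_sum_smul_le_of_abs_le c (fun i => y j - z i j) hc_abs
    _ = ε ^ 2 * V := by
        rw [hV, ← mul_sum, sum_comm]
        field_simp

/-- Quantitative stability of the Fréchet mean under empirical reweighting: if each
point `y j` is the arithmetic mean of its paired points `z i j`, `V` is the Fréchet
function value at `y`, and the weights `ξ i` sum to `n` with `|ξ i − n/m| ≤ ε·n/m`,
then the reweighted means `y_n j = (1/n) ∑ᵢ ξ i • z i j` satisfy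
`∑ⱼ ‖y j − y_n j‖² ≤ ε² · V`. -/
theorem frechet_mean_reweighting_stability
    {E : Type*} [NormedAddCommGroup E] [InnerProductSpace ℝ E]
    (m J : ℕ) (hm : 1 ≤ m) (hJ : 1 ≤ J)
    (z : Fin m → Fin J → E) (y : Fin J → E)
    (hy : ∀ j, y j = (1 / m : ℝ) • ∑ i, z i j)
    (V : ℝ) (hV : V = (1 / m : ℝ) * ∑ i, ∑ j, ‖y j - z i j‖ ^ 2)
    (n : ℝ) (hn : 0 < n) (ε : ℝ) (hε : 0 ≤ ε)
    (ξ : Fin m → ℝ) (hsum : ∑ i, ξ i = n) (hξ : ∀ i, |ξ i - n / m| ≤ ε * n / m)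
    (yn : Fin J → E) (hyn : ∀ j, yn j = (1 / n : ℝ) • ∑ i, ξ i • z i j) :
    ∑ j, ‖y j - yn j‖ ^ 2 ≤ ε ^ 2 * V :=
  frechet_mean_reweighting_stability_general m J z y hy V hV n hn ε ξ hsum hξ yn hyn
end

section
/- Let d : ℕ → ℝ satisfy d i ≥ 0 for all i and suppose the family (d i)² is summable. For each j ∈ ℕ suppose the set {i | d i ≥ 2^{−j}} is finite and let N j denote its cardinality. Then ∑'_{j∈ℕ} (N j : ℝ) · 2^{−2j} ≤ (4/3) · ∑'_{i∈ℕ} (d i)². -/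
/-!
Writing `Nⱼ` as a sum of indicators and swapping the order of summation,
`∑ⱼ Nⱼ 4⁻ʲ = ∑ᵢ ∑_{j : 2⁻ʲ ≤ dᵢ} 4⁻ʲ`. The inner sum is a geometric tail starting at the least
such `j₀`, so it is at most `(4/3) 4^{-j₀} ≤ (4/3) dᵢ²`. Working in `ℝ≥0∞` makes the interchange
of summation free of summability side conditions.
-/

open scoped ENNReal

theorem ENNReal.tsum_encard_mul_eq_tsum_tsum_indicator {ι κ : Type*} (R : κ → ι → Prop)
    (w : κ → ℝ≥0∞) :
    ∑' j, {i | R j i}.encard * w j = ∑' i, ∑' j, {j | R j i}.indicator w j := by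
  rw [ENNReal.tsum_comm]
  refine tsum_congr fun j => ?_
  rw [← ENNReal.tsum_set_const, tsum_subtype _ fun _ => w j]
  rfl

theorem ENNReal.tsum_indicator_pow_le (s : Set ℕ) (r : ℝ≥0∞) :
    ∑' j, s.indicator (r ^ ·) j ≤ r ^ sInf s * (1 - r)⁻¹ := by
  have hsupp : Function.support (s.indicator (r ^ ·)) ⊆ Set.range (· + sInf s) := fun j hj =>
    ⟨j - sInf s, Nat.sub_add_cancel (Nat.sInf_le (Set.mem_of_indicator_ne_zero hj))⟩
  calc ∑' j, s.indicator (r ^ ·) j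
      = ∑' k, s.indicator (r ^ ·) (k + sInf s) := ((add_left_injective _).tsum_eq hsupp).symm
    _ ≤ ∑' k, r ^ (k + sInf s) := ENNReal.tsum_le_tsum fun k => Set.indicator_le_self _ _ _
    _ = r ^ sInf s * (1 - r)⁻¹ := by
      simp only [pow_add, ENNReal.tsum_mul_right, ENNReal.tsum_geometric, mul_comm]

theorem ENNReal.ofReal_two_zpow_neg_two_mul (j : ℕ) :
    ENNReal.ofReal ((2 : ℝ) ^ (-(2 * j : ℤ))) = 4⁻¹ ^ j := by
  rw [zpow_neg, zpow_mul, zpow_natCast, ← inv_pow, ENNReal.ofReal_pow (by positivity),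
    ENNReal.ofReal_inv_of_pos (by positivity)]
  norm_num

theorem tsum_indicator_inv_four_pow_le (x : ℝ) :
    ∑' j, {j : ℕ | (2 : ℝ) ^ (-(j : ℤ)) ≤ x}.indicator ((4⁻¹ : ℝ≥0∞) ^ ·) j ≤
      4 / 3 * ENNReal.ofReal (x ^ 2) := by
  set s := {j : ℕ | (2 : ℝ) ^ (-(j : ℤ)) ≤ x}
  rcases s.eq_empty_or_nonempty with hs | hs
  · simp [hs]
  have hmin : (2 : ℝ) ^ (-((sInf s : ℕ) : ℤ)) ≤ x := Nat.sInf_mem hs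
  have hgeom : (1 - 4⁻¹ : ℝ≥0∞)⁻¹ = 4 / 3 := by
    have h : (1 - 4⁻¹ : ℝ≥0∞) = 3 / 4 := by
      refine ENNReal.sub_eq_of_eq_add (by simp) ?_
      rw [div_eq_mul_inv, ← add_one_mul, show (3 + 1 : ℝ≥0∞) = 4 by norm_num,
        ENNReal.mul_inv_cancel (by simp) (by simp)]
    rw [h, ENNReal.inv_div (by simp) (by simp)]
  calc ∑' j, s.indicator ((4⁻¹ : ℝ≥0∞) ^ ·) j ≤ 4⁻¹ ^ sInf s * (1 - 4⁻¹)⁻¹ :=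
        ENNReal.tsum_indicator_pow_le s _
    _ = 4 / 3 * ENNReal.ofReal (((2 : ℝ) ^ (-((sInf s : ℕ) : ℤ))) ^ 2) := by
      rw [hgeom, mul_comm, ← ENNReal.ofReal_two_zpow_neg_two_mul, ← zpow_natCast, ← zpow_mul]
      ring_nf
    _ ≤ 4 / 3 * ENNReal.ofReal (x ^ 2) := by gcongr

theorem tsum_le_of_tsum_ofReal_le {ι : Type*} {f : ι → ℝ} (hf : ∀ i, 0 ≤ f i) {B : ℝ}
    (hB : 0 ≤ B) (h : ∑' i, ENNReal.ofReal (f i) ≤ ENNReal.ofReal B) : ∑' i, f i ≤ B := by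
  have := ENNReal.toReal_mono ENNReal.ofReal_ne_top h
  rwa [ENNReal.tsum_toReal_eq fun _ => ENNReal.ofReal_ne_top, ENNReal.toReal_ofReal hB,
    tsum_congr fun i => ENNReal.toReal_ofReal (hf i)] at this

theorem counting_bound_from_summable_sq_general
    (d : ℕ → ℝ) (hsum : Summable fun i => d i ^ 2)
    (hfin : ∀ j : ℕ, {i : ℕ | (2 : ℝ) ^ (-(j : ℤ)) ≤ d i}.Finite)
    (N : ℕ → ℕ) (hN : ∀ j, N j = Nat.card {i : ℕ | (2 : ℝ) ^ (-(j : ℤ)) ≤ d i}) :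
    ∑' j : ℕ, (N j : ℝ) * (2 : ℝ) ^ (-(2 * j : ℤ)) ≤ (4 / 3) * ∑' i, d i ^ 2 := by
  refine tsum_le_of_tsum_ofReal_le (fun j => by positivity)
    (mul_nonneg (by norm_num) (tsum_nonneg fun i => sq_nonneg _)) ?_
  calc ∑' j : ℕ, ENNReal.ofReal ((N j : ℝ) * (2 : ℝ) ^ (-(2 * j : ℤ)))
      = ∑' j : ℕ, {i | (2 : ℝ) ^ (-(j : ℤ)) ≤ d i}.encard * (4⁻¹ : ℝ≥0∞) ^ j := by
        refine tsum_congr fun j => ?_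
        rw [ENNReal.ofReal_mul (Nat.cast_nonneg _), ENNReal.ofReal_natCast, hN,
          Nat.card_coe_set_eq, ← (hfin j).cast_ncard_eq, ENat.toENNReal_coe,
          ENNReal.ofReal_two_zpow_neg_two_mul]
    _ = ∑' i, ∑' j, {j : ℕ | (2 : ℝ) ^ (-(j : ℤ)) ≤ d i}.indicator ((4⁻¹ : ℝ≥0∞) ^ ·) j :=
        ENNReal.tsum_encard_mul_eq_tsum_tsum_indicator _ _
    _ ≤ ∑' i, 4 / 3 * ENNReal.ofReal (d i ^ 2) :=
        ENNReal.tsum_le_tsum fun i => tsum_indicator_inv_four_pow_le _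
    _ = ENNReal.ofReal (4 / 3 * ∑' i, d i ^ 2) := by
        rw [ENNReal.tsum_mul_left, ← ENNReal.ofReal_tsum_of_nonneg (fun _ => sq_nonneg _) hsum,
          ENNReal.ofReal_mul (by norm_num), ENNReal.ofReal_div_of_pos (by norm_num)]
        norm_num

/-- Summability bound from the compactness argument for persistence diagrams:
if `d i ≥ 0`, `(d i)²` is summable, and `N j` counts the indices with
`d i ≥ 2⁻ʲ`, then `∑ⱼ N j · 2⁻²ʲ ≤ (4/3) ∑ᵢ (d i)²`. -/
theorem counting_bound_from_summable_sq
    (d : ℕ → ℝ) (hd : ∀ i, 0 ≤ d i) (hsum : Summable fun i => d i ^ 2)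
    (hfin : ∀ j : ℕ, {i : ℕ | (2 : ℝ) ^ (-(j : ℤ)) ≤ d i}.Finite)
    (N : ℕ → ℕ) (hN : ∀ j, N j = Nat.card {i : ℕ | (2 : ℝ) ^ (-(j : ℤ)) ≤ d i}) :
    ∑' j : ℕ, (N j : ℝ) * (2 : ℝ) ^ (-(2 * j : ℤ)) ≤ (4 / 3) * ∑' i, d i ^ 2 :=
  counting_bound_from_summable_sq_general d hsum hfin N hN
end
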